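/- For a uniform noise and positive gbAR(p) model, the worst-case min-entropy per bit of any block (X_t,...,X_{t+n}) given (X_{t-1},...,X_{t-p}) equals -log(1 - β/2), independently of n: h∞(X_t,...,X_{t+n} | X_{t-1},...,X_{t-p}) = -log(1 - β/2). -/
import Mathlib


open Real

/-- Maximum of a real-valued function on a finite nonempty type. -/
noncomputable def fmax {α : Type*} [Fintype α] [Nonempty α] (f : α → ℝ) : ℝ :=
  Finset.univ.sup' Finset.univ_nonempty f

/-- Transition probability of a uniform noise positive gbAR(p) model. -/
noncomputable def gbT (p : ℕ) (α : Fin p → ℝ) (β : ℝ)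
    (h : Fin p → Bool) (x : Bool) : ℝ :=
  (∑ i : Fin p, α i * (if x = h i then 1 else 0)) + β / 2

/-- Conditional probability of a block of length `n+1` given a length-`p`
prefix (chronological order), via the Markov factorization. -/
noncomputable def gbBlockCond (p n : ℕ) (α : Fin p → ℝ) (β : ℝ)
    (pre : Fin p → Bool) (b : Fin (n + 1) → Bool) : ℝ :=
  ∏ i : Fin (n + 1), gbT p α β (fun j : Fin p =>
    Fin.append pre b ⟨i.1 + j.1, by have := i.isLt; have := j.isLt; omega⟩) (b i)

/-- for a uniform noise and positive gbAR(p) model, the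
worst-case min-entropy per bit of any block `(X_t,...,X_{t+n})` given
`(X_{t-1},...,X_{t-p})` equals `-log₂(1 - β/2)`, independently of `n`. -/
theorem gbar_worstcase_minEntropy_perBit (p n : ℕ) (hp : 0 < p)
    (α : Fin p → ℝ) (β : ℝ)
    (hα : ∀ i, 0 ≤ α i) (hβ : 0 < β ∧ β ≤ 1)
    (hsum : (∑ i, α i) + β = 1) :
    -(1 / ((n : ℝ) + 1)) * Real.logb 2
        (fmax (fun pb : (Fin p → Bool) × (Fin (n + 1) → Bool) =>
          gbBlockCond p n α β pb.1 pb.2)) =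
      -Real.logb 2 (1 - β / 2) := by
  have hαsum : (∑ i, α i) = 1 - β := by linarith
  have hle : ∀ (h : Fin p → Bool) (x : Bool), gbT p α β h x ≤ 1 - β / 2 := by
    intro h x
    unfold gbT
    have h1 : (∑ i : Fin p, α i * (if x = h i then 1 else 0)) ≤ ∑ i : Fin p, α i := by
      apply Finset.sum_le_sum
      intro i _
      by_cases hx : x = h i <;> simp [hx, hα i]
    linarith
  have hmax : fmax (fun pb : (Fin p → Bool) × (Fin (n + 1) → Bool) =>
      gbBlockCond p n α β pb.1 pb.2) = (1 - β / 2) ^ (n + 1) := by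
    apply le_antisymm
    · apply Finset.sup'_le
      intro pb _
      unfold gbBlockCond
      calc (∏ i : Fin (n + 1), gbT p α β _ (pb.2 i))
          ≤ ∏ _i : Fin (n + 1), (1 - β / 2) := by
            apply Finset.prod_le_prod
            · intro i _
              unfold gbT
              have hnn : (0:ℝ) ≤ ∑ j : Fin p, α j * (if pb.2 i =
                  (fun j : Fin p => Fin.append pb.1 pb.2
                    ⟨i.1 + j.1, by have := i.isLt; have := j.isLt; omega⟩) j
                  then 1 else 0) := by
                apply Finset.sum_nonneg
                intro j _
                split <;> simp [hα j]
              linarith [hβ.1]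
            · intro i _; exact hle _ _
        _ = (1 - β / 2) ^ (n + 1) := by
            rw [Finset.prod_const, Finset.card_univ, Fintype.card_fin]
    · have := Finset.le_sup' (b := ((fun _ => true, fun _ => true) :
        (Fin p → Bool) × (Fin (n + 1) → Bool)))
        (fun pb : (Fin p → Bool) × (Fin (n + 1) → Bool) =>
          gbBlockCond p n α β pb.1 pb.2) (Finset.mem_univ _)
      refine le_trans (le_of_eq ?_) this
      unfold gbBlockCond gbT
      have happ : ∀ k : Fin (p + (n+1)),
          Fin.append (fun _ : Fin p => true) (fun _ : Fin (n+1) => true) k = true := by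
        intro k
        unfold Fin.append Fin.addCases
        by_cases hk : (k : ℕ) < p <;> simp [hk]
      simp only [happ]
      simp [hαsum, Finset.prod_const]
      ring
  rw [hmax]
  have hpos : (0:ℝ) < 1 - β / 2 := by linarith [hβ.2]
  rw [show ((1 - β / 2) ^ (n + 1)) = (1 - β / 2) ^ ((n:ℕ) + 1) from rfl,
    Real.logb, Real.log_pow]
  have hn1 : ((n:ℝ) + 1) ≠ 0 := by positivity
  rw [Real.logb]
  push_cast
  field_simp
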